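/- arXiv:2407.04107 — 3 statements merged into one kernel-verified Lean document; each statement's English description precedes it below -/
import Mathlib

section
/- Let n ≥ 1 and let N be a real number with N > 2n + 1. There exists a constant C > 0, depending only on n and N, such that the following holds. For every family of nonnegative coefficients c : ℤⁿ → [0,∞), define f_{j'} : ℝⁿ → [0,∞] by f_{j'}(x) = Σ_{k'∈ℤⁿ} c(k')·1_{[0,1)ⁿ}(2^{j'}·x − k'). Then for all integers j, j' with j < j', every k ∈ ℤⁿ, and every x ∈ ℝⁿ with 2^{j}·x − k ∈ [0,1)ⁿ, one has Σ_{k'∈ℤⁿ} c(k')·(1 + ‖k − 2^{j−j'}·k'‖)^{−N} ≤ C · 2^{n(j'−j)} · M f_{j'}(x). -/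
open MeasureTheory ENNReal

/-- A point of `ℤⁿ` regarded as a point of Euclidean space `ℝⁿ`. -/
noncomputable def intPt (n : ℕ) (k : Fin n → ℤ) : EuclideanSpace ℝ (Fin n) :=
  (WithLp.equiv 2 (Fin n → ℝ)).symm (fun i => (k i : ℝ))

/-- The unit cube `[0,1)ⁿ` in `ℝⁿ`. -/
def unitCube (n : ℕ) : Set (EuclideanSpace ℝ (Fin n)) :=
  {y | ∀ i, 0 ≤ y i ∧ y i < 1}

/-- The Hardy–Littlewood maximal function of `g : ℝⁿ → [0,∞]`. -/
noncomputable def maxFn (n : ℕ) (g : EuclideanSpace ℝ (Fin n) → ℝ≥0∞)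
    (x : EuclideanSpace ℝ (Fin n)) : ℝ≥0∞ :=
  ⨆ (r : ℝ) (_ : 0 < r), (∫⁻ y in Metric.ball x r, g y) / volume (Metric.ball x r)

/-- The function `f_{j'}(x) = ∑_{k'} c(k') 1_{[0,1)ⁿ}(2^{j'} x - k')`. -/
noncomputable def waveletSum (n : ℕ) (c : (Fin n → ℤ) → NNReal) (j' : ℤ)
    (x : EuclideanSpace ℝ (Fin n)) : ℝ≥0∞ :=
  ∑' k' : Fin n → ℤ,
    (c k' : ℝ≥0∞) * (unitCube n).indicator 1 ((2 : ℝ) ^ j' • x - intPt n k')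

/-!
Group the `k'` into the shells `‖k - 2^{j-j'} k'‖ ≤ m`, `m ∈ ℕ`: the weight
`(1 + ‖k - 2^{j-j'} k'‖)^{-N}` is at most `2^N (1 + m)^{-N}` for `m` the ceiling of the distance.
The cubes `Q_{j',k'} = 2^{-j'}(k' + [0,1)ⁿ)` of the `m`-th shell all lie in a ball around `x` of
radius `≈ 2^{-j}(1 + m)√n`, so the coefficient mass of the shell times `|Q_{j',k'}| = 2^{-nj'}` is
at most the integral of `f_{j'}` over that ball, hence `≲ (1 + m)ⁿ 2^{n(j'-j)} M f_{j'}(x)`.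
The resulting series `∑ₘ (1 + m)^{n-N}` converges because `N > n + 1`.
-/

open Metric Set

/-- The dyadic cube `2^{-j}(k + [0,1)ⁿ)`. -/
def dyadicCube (n : ℕ) (j : ℤ) (k : Fin n → ℤ) : Set (EuclideanSpace ℝ (Fin n)) :=
  {y | (2 : ℝ) ^ j • y - intPt n k ∈ unitCube n}

theorem unitCube_eq_preimage_pi (n : ℕ) :
    unitCube n = WithLp.ofLp ⁻¹' univ.pi fun _ : Fin n => Ico (0 : ℝ) 1 := by
  ext y
  simp [unitCube]

theorem measurableSet_unitCube (n : ℕ) : MeasurableSet (unitCube n) := by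
  rw [unitCube_eq_preimage_pi]
  exact (MeasurableSet.univ_pi fun _ => measurableSet_Ico).preimage
    (PiLp.volume_preserving_ofLp (Fin n)).measurable

theorem volume_unitCube (n : ℕ) : volume (unitCube n) = 1 := by
  rw [unitCube_eq_preimage_pi, (PiLp.volume_preserving_ofLp (Fin n)).measure_preimage
    (MeasurableSet.univ_pi fun _ => measurableSet_Ico).nullMeasurableSet, volume_pi_pi]
  simp

theorem dyadicCube_eq_preimage (n : ℕ) (j : ℤ) (k : Fin n → ℤ) :
    dyadicCube n j k = ((2 : ℝ) ^ j • ·) ⁻¹' ((· + -intPt n k) ⁻¹' unitCube n) := by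
  ext y
  simp [dyadicCube, sub_eq_add_neg]

theorem measurableSet_dyadicCube (n : ℕ) (j : ℤ) (k : Fin n → ℤ) :
    MeasurableSet (dyadicCube n j k) :=
  (measurableSet_unitCube n).preimage (by fun_prop)

theorem volume_dyadicCube (n : ℕ) (j : ℤ) (k : Fin n → ℤ) :
    volume (dyadicCube n j k) = ENNReal.ofReal ((2 ^ (-j) : ℝ) ^ n) := by
  rw [dyadicCube_eq_preimage, Measure.addHaar_preimage_smul _ (by positivity),
    measure_preimage_add_right, volume_unitCube, finrank_euclideanSpace_fin, mul_one, zpow_neg,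
    inv_pow, abs_of_pos (by positivity)]

theorem norm_le_sqrt_of_mem_unitCube {n : ℕ} {z : EuclideanSpace ℝ (Fin n)}
    (hz : z ∈ unitCube n) : ‖z‖ ≤ √n := by
  rw [EuclideanSpace.norm_eq]
  refine Real.sqrt_le_sqrt ?_
  calc ∑ i, ‖z i‖ ^ 2 ≤ ∑ _i : Fin n, (1 : ℝ) := by
        gcongr with i
        rw [Real.norm_eq_abs, sq_abs]
        nlinarith [hz i]
    _ = n := by simp

theorem norm_sub_le_of_mem_dyadicCube {n : ℕ} {j : ℤ} {k : Fin n → ℤ}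
    {y : EuclideanSpace ℝ (Fin n)} (hy : y ∈ dyadicCube n j k) :
    ‖y - (2 : ℝ) ^ (-j) • intPt n k‖ ≤ 2 ^ (-j) * √n := by
  have : y - (2 : ℝ) ^ (-j) • intPt n k = (2 : ℝ) ^ (-j) • ((2 : ℝ) ^ j • y - intPt n k) := by
    rw [smul_sub, smul_smul, ← zpow_add₀ two_ne_zero, neg_add_cancel, zpow_zero, one_smul]
  rw [this, norm_smul, Real.norm_of_nonneg (by positivity)]
  gcongr
  exact norm_le_sqrt_of_mem_unitCube hy

theorem dyadicCube_subset_ball {n : ℕ} {j j' : ℤ} (hjj : j ≤ j') {k k' : Fin n → ℤ}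
    {x : EuclideanSpace ℝ (Fin n)} (hx : x ∈ dyadicCube n j k) {R : ℝ}
    (hR : ‖intPt n k - (2 : ℝ) ^ (j - j') • intPt n k'‖ ≤ R) :
    dyadicCube n j' k' ⊆ ball x (2 ^ (-j) * ((1 + R) * (1 + 2 * √n))) := by
  intro y hy
  have hcorner : (2 : ℝ) ^ (-j) • intPt n k - (2 : ℝ) ^ (-j') • intPt n k'
      = (2 : ℝ) ^ (-j) • (intPt n k - (2 : ℝ) ^ (j - j') • intPt n k') := by
    rw [smul_sub, smul_smul, ← zpow_add₀ two_ne_zero, show -j + (j - j') = -j' by ring]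
  have hdist : ‖(2 : ℝ) ^ (-j) • intPt n k - (2 : ℝ) ^ (-j') • intPt n k'‖ ≤ 2 ^ (-j) * R := by
    rw [hcorner, norm_smul, Real.norm_of_nonneg (by positivity)]
    gcongr
  have hy' : ‖y - (2 : ℝ) ^ (-j') • intPt n k'‖ ≤ 2 ^ (-j) * √n :=
    (norm_sub_le_of_mem_dyadicCube hy).trans (by gcongr; norm_num)
  have hx' : ‖(2 : ℝ) ^ (-j) • intPt n k - x‖ ≤ 2 ^ (-j) * √n :=
    norm_sub_rev x _ ▸ norm_sub_le_of_mem_dyadicCube hx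
  have hR0 : 0 ≤ R := (norm_nonneg _).trans hR
  have htri := dist_triangle4 y ((2 : ℝ) ^ (-j') • intPt n k') ((2 : ℝ) ^ (-j) • intPt n k) x
  rw [dist_comm _ ((2 : ℝ) ^ (-j) • intPt n k)] at htri
  simp only [dist_eq_norm] at htri
  rw [mem_ball, dist_eq_norm]
  calc ‖y - x‖ ≤ 2 ^ (-j) * (R + 2 * √n) := by linarith
    _ < 2 ^ (-j) * ((1 + R) * (1 + 2 * √n)) := by
        gcongr
        nlinarith [Real.sqrt_nonneg n]

theorem setLIntegral_ball_le_maxFn_mul {n : ℕ} (g : EuclideanSpace ℝ (Fin n) → ℝ≥0∞)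
    (x : EuclideanSpace ℝ (Fin n)) {r : ℝ} (hr : 0 < r) :
    ∫⁻ y in ball x r, g y ≤ maxFn n g x * volume (ball x r) :=
  (ENNReal.div_le_iff (measure_ball_pos volume x hr).ne' measure_ball_lt_top.ne).mp <|
    le_iSup₂ (f := fun r (_ : 0 < r) =>
      (∫⁻ y in ball x r, g y) / volume (ball x r)) r hr

theorem waveletSum_eq_tsum_indicator (n : ℕ) (c : (Fin n → ℤ) → NNReal) (j : ℤ)
    (y : EuclideanSpace ℝ (Fin n)) :
    waveletSum n c j y = ∑' k, (c k : ℝ≥0∞) * (dyadicCube n j k).indicator 1 y :=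
  rfl

theorem setLIntegral_waveletSum (n : ℕ) (c : (Fin n → ℤ) → NNReal) (j : ℤ)
    (s : Set (EuclideanSpace ℝ (Fin n))) :
    ∫⁻ y in s, waveletSum n c j y = ∑' k, (c k : ℝ≥0∞) * volume (dyadicCube n j k ∩ s) := by
  simp_rw [waveletSum_eq_tsum_indicator]
  rw [lintegral_tsum fun k => ((measurable_one.indicator
    (measurableSet_dyadicCube n j k)).const_mul _).aemeasurable]
  congr 1 with k
  rw [lintegral_const_mul _ (measurable_one.indicator (measurableSet_dyadicCube n j k)),
    lintegral_indicator_one (measurableSet_dyadicCube n j k),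
    Measure.restrict_apply (measurableSet_dyadicCube n j k)]

theorem ofReal_two_zpow_pow_eq_rpow (n : ℕ) (a b : ℤ) :
    ENNReal.ofReal (((2 : ℝ) ^ (a - b)) ^ n) = (2 : ℝ≥0∞) ^ ((n : ℝ) * ((a : ℝ) - b)) := by
  rw [← ENNReal.ofReal_ofNat 2, ENNReal.ofReal_rpow_of_pos two_pos, mul_comm, Real.rpow_mul
    zero_le_two, ← Int.cast_sub, Real.rpow_intCast, Real.rpow_natCast]

theorem tsum_indicator_le_maxFn {n : ℕ} (c : (Fin n → ℤ) → NNReal) {j j' : ℤ} (hjj : j ≤ j')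
    {k : Fin n → ℤ} {x : EuclideanSpace ℝ (Fin n)} (hx : x ∈ dyadicCube n j k) {R : ℝ}
    (hR : 0 ≤ R) :
    ∑' k', {k' | ‖intPt n k - (2 : ℝ) ^ (j - j') • intPt n k'‖ ≤ R}.indicator
        (fun k' => (c k' : ℝ≥0∞)) k'
      ≤ ENNReal.ofReal ((1 + R) ^ n) * (ENNReal.ofReal ((1 + 2 * √n) ^ n)
        * volume (ball (0 : EuclideanSpace ℝ (Fin n)) 1) * (2 : ℝ≥0∞) ^ ((n : ℝ) * ((j' : ℝ) - j))
        * maxFn n (waveletSum n c j') x) := by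
  set S := {k' | ‖intPt n k - (2 : ℝ) ^ (j - j') • intPt n k'‖ ≤ R}
  set r : ℝ := 2 ^ (-j) * ((1 + R) * (1 + 2 * √n))
  have hr : 0 < r := by positivity
  have hvol_ne_zero : ENNReal.ofReal ((2 ^ (-j') : ℝ) ^ n) ≠ 0 := by
    rw [ne_eq, ENNReal.ofReal_eq_zero, not_le]; positivity
  have hball : ENNReal.ofReal (r ^ n) = ENNReal.ofReal ((1 + R) ^ n)
      * ENNReal.ofReal ((1 + 2 * √n) ^ n) * ENNReal.ofReal (((2 : ℝ) ^ (j' - j)) ^ n)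
      * ENNReal.ofReal ((2 ^ (-j') : ℝ) ^ n) := by
    have h2 : (2 : ℝ) ^ (-j) = 2 ^ (j' - j) * 2 ^ (-j') := by
      rw [← zpow_add₀ two_ne_zero]; ring_nf
    rw [← ENNReal.ofReal_mul (by positivity), ← ENNReal.ofReal_mul (by positivity),
      ← ENNReal.ofReal_mul (by positivity), ← mul_pow, ← mul_pow, ← mul_pow]
    simp only [r, h2]
    ring_nf
  rw [← ENNReal.mul_le_mul_iff_left hvol_ne_zero ENNReal.ofReal_ne_top, ← ENNReal.tsum_mul_right]
  calc ∑' k', S.indicator (fun k' => (c k' : ℝ≥0∞)) k' * ENNReal.ofReal ((2 ^ (-j') : ℝ) ^ n)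
      = ∑' k', S.indicator
          (fun k' => (c k' : ℝ≥0∞) * volume (dyadicCube n j' k' ∩ ball x r)) k' := by
        congr 1 with k'
        by_cases hk' : k' ∈ S
        · rw [indicator_of_mem hk', indicator_of_mem hk', inter_eq_left.mpr
            (dyadicCube_subset_ball hjj hx hk'), volume_dyadicCube]
        · rw [indicator_of_notMem hk', indicator_of_notMem hk', zero_mul]
    _ ≤ ∑' k', (c k' : ℝ≥0∞) * volume (dyadicCube n j' k' ∩ ball x r) :=
        ENNReal.tsum_le_tsum fun k' => indicator_le_self S _ k'
    _ = ∫⁻ y in ball x r, waveletSum n c j' y := (setLIntegral_waveletSum n c j' _).symm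
    _ ≤ maxFn n (waveletSum n c j') x * volume (ball x r) := setLIntegral_ball_le_maxFn_mul _ x hr
    _ = _ := by
        rw [Measure.addHaar_ball_of_pos _ _ hr, finrank_euclideanSpace_fin, hball,
          ofReal_two_zpow_pow_eq_rpow]
        ring

theorem one_add_rpow_neg_le_two_rpow_mul_ceil {N d : ℝ} (hN : 0 ≤ N) (hd : 0 ≤ d) :
    (1 + d) ^ (-N) ≤ 2 ^ N * (1 + ⌈d⌉₊) ^ (-N) := by
  have hceil : (1 : ℝ) + ⌈d⌉₊ ≤ 2 * (1 + d) := by linarith [Nat.ceil_lt_add_one hd]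
  calc (1 + d) ^ (-N) = 2 ^ N * (2 * (1 + d)) ^ (-N) := by
        rw [Real.mul_rpow zero_le_two (by positivity), ← mul_assoc, ← Real.rpow_add two_pos,
          add_neg_cancel, Real.rpow_zero, one_mul]
    _ ≤ 2 ^ N * (1 + ⌈d⌉₊) ^ (-N) :=
        mul_le_mul_of_nonneg_left
          (Real.rpow_le_rpow_of_nonpos (by positivity) hceil (neg_nonpos.mpr hN)) (by positivity)

theorem tsum_mul_one_add_rpow_neg_le {ι : Type*} (c : ι → ℝ≥0∞) (d : ι → ℝ)
    (hd : ∀ i, 0 ≤ d i) {N : ℝ} (hN : 0 ≤ N) :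
    ∑' i, c i * ENNReal.ofReal ((1 + d i) ^ (-N)) ≤ ENNReal.ofReal (2 ^ N)
      * ∑' m : ℕ, ENNReal.ofReal ((1 + m) ^ (-N)) * ∑' i, {i | d i ≤ m}.indicator c i := by
  have hterm : ∀ i, c i * ENNReal.ofReal ((1 + d i) ^ (-N))
      ≤ ENNReal.ofReal (2 ^ N) * ∑' m : ℕ, ENNReal.ofReal ((1 + m) ^ (-N))
        * {i | d i ≤ m}.indicator c i := fun i =>
    calc c i * ENNReal.ofReal ((1 + d i) ^ (-N))
        ≤ ENNReal.ofReal (2 ^ N) * (ENNReal.ofReal ((1 + ⌈d i⌉₊) ^ (-N)) * c i) := by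
          rw [mul_comm (c i), ← mul_assoc, ← ENNReal.ofReal_mul (by positivity)]
          gcongr
          exact one_add_rpow_neg_le_two_rpow_mul_ceil hN (hd i)
      _ ≤ _ := by
          gcongr
          refine le_of_eq_of_le ?_ (ENNReal.le_tsum ⌈d i⌉₊)
          rw [indicator_of_mem (show i ∈ {i' | d i' ≤ (⌈d i⌉₊ : ℝ)} from Nat.le_ceil (d i))]
  calc ∑' i, c i * ENNReal.ofReal ((1 + d i) ^ (-N))
      ≤ ∑' i, ENNReal.ofReal (2 ^ N) * ∑' m : ℕ, ENNReal.ofReal ((1 + m) ^ (-N))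
        * {i | d i ≤ m}.indicator c i := ENNReal.tsum_le_tsum hterm
    _ = _ := by
        rw [ENNReal.tsum_mul_left, ENNReal.tsum_comm]
        simp_rw [ENNReal.tsum_mul_left]

theorem tsum_ofReal_one_add_rpow_ne_top {p : ℝ} (hp : p < -1) :
    ∑' m : ℕ, ENNReal.ofReal ((1 + m) ^ p) ≠ ∞ := by
  have hsum : Summable fun m : ℕ => ((1 : ℝ) + m) ^ p := by
    simpa [add_comm] using (summable_nat_add_iff 1).mpr (Real.summable_nat_rpow.mpr hp)
  rw [← ENNReal.ofReal_tsum_of_nonneg (fun m => by positivity) hsum]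
  exact ENNReal.ofReal_ne_top

theorem ofReal_rpow_neg_mul_ofReal_pow {t : ℝ} (ht : 0 < t) (N : ℝ) (n : ℕ) :
    ENNReal.ofReal (t ^ (-N)) * ENNReal.ofReal (t ^ n) = ENNReal.ofReal (t ^ ((n : ℝ) - N)) := by
  rw [← ENNReal.ofReal_mul (by positivity), ← Real.rpow_natCast, ← Real.rpow_add ht, neg_add_eq_sub]

theorem sum_le_maximal_of_lt_general (n : ℕ) (N : ℝ) (hN : 2 * (n : ℝ) + 1 < N) :
    ∃ C : ℝ, 0 < C ∧
      ∀ (c : (Fin n → ℤ) → NNReal) (j j' : ℤ), j < j' →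
        ∀ (k : Fin n → ℤ) (x : EuclideanSpace ℝ (Fin n)),
          (2 : ℝ) ^ j • x - intPt n k ∈ unitCube n →
          (∑' k' : Fin n → ℤ, (c k' : ℝ≥0∞) *
              ENNReal.ofReal ((1 + ‖intPt n k - (2 : ℝ) ^ (j - j') • intPt n k'‖) ^ (-N)))
            ≤ ENNReal.ofReal C * (2 : ℝ≥0∞) ^ ((n : ℝ) * ((j' : ℝ) - (j : ℝ))) *
                maxFn n (waveletSum n c j') x := by
  set V := ENNReal.ofReal ((1 + 2 * √n) ^ n) * volume (ball (0 : EuclideanSpace ℝ (Fin n)) 1)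
  set A := ENNReal.ofReal (2 ^ N) * (∑' m : ℕ, ENNReal.ofReal ((1 + m) ^ ((n : ℝ) - N))) * V
  have hA : A ≠ ∞ := ENNReal.mul_ne_top (ENNReal.mul_ne_top ENNReal.ofReal_ne_top
    (tsum_ofReal_one_add_rpow_ne_top (by linarith)))
    (ENNReal.mul_ne_top ENNReal.ofReal_ne_top measure_ball_lt_top.ne)
  refine ⟨A.toReal + 1, by positivity, fun c j j' hjj k x hx => ?_⟩
  set F := (2 : ℝ≥0∞) ^ ((n : ℝ) * ((j' : ℝ) - j)) * maxFn n (waveletSum n c j') x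
  calc _ ≤ ENNReal.ofReal (2 ^ N) * ∑' m : ℕ, ENNReal.ofReal ((1 + m) ^ (-N)) * ∑' k',
          {k' | ‖intPt n k - (2 : ℝ) ^ (j - j') • intPt n k'‖ ≤ m}.indicator
            (fun k' => (c k' : ℝ≥0∞)) k' :=
        tsum_mul_one_add_rpow_neg_le _ _ (fun _ => norm_nonneg _) (by linarith)
    _ ≤ ENNReal.ofReal (2 ^ N) * ∑' m : ℕ, ENNReal.ofReal ((1 + m) ^ (-N))
          * (ENNReal.ofReal ((1 + m) ^ n) * (V * F)) := by
        gcongr with m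
        simpa only [V, F, mul_assoc] using tsum_indicator_le_maxFn c hjj.le hx m.cast_nonneg
    _ = A * F := by
        simp_rw [← mul_assoc, ENNReal.tsum_mul_right]
        simp only [A, ← mul_assoc]
        congr 3
        exact tsum_congr fun m => ofReal_rpow_neg_mul_ofReal_pow (by positivity) N n
    _ ≤ ENNReal.ofReal (A.toReal + 1) * F := by
        gcongr
        exact (ENNReal.le_ofReal_iff_toReal_le hA (by positivity)).mpr (by linarith)
    _ = _ := by rw [mul_assoc]

/-- Lemma 2.6, case `j < j'`: for `N > 2n+1` there is `C = C(n, N) > 0` such that for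
`j < j'`, `k ∈ ℤⁿ` and `x` with `2^j x - k ∈ [0,1)ⁿ`,
`∑_{k'} c(k') (1+‖k - 2^{j-j'} k'‖)^{-N} ≤ C · 2^{n(j'-j)} · M f_{j'}(x)`. -/
theorem sum_le_maximal_of_lt (n : ℕ) (hn : 1 ≤ n) (N : ℝ) (hN : 2 * (n : ℝ) + 1 < N) :
    ∃ C : ℝ, 0 < C ∧
      ∀ (c : (Fin n → ℤ) → NNReal) (j j' : ℤ), j < j' →
        ∀ (k : Fin n → ℤ) (x : EuclideanSpace ℝ (Fin n)),
          (2 : ℝ) ^ j • x - intPt n k ∈ unitCube n →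
          (∑' k' : Fin n → ℤ, (c k' : ℝ≥0∞) *
              ENNReal.ofReal ((1 + ‖intPt n k - (2 : ℝ) ^ (j - j') • intPt n k'‖) ^ (-N)))
            ≤ ENNReal.ofReal C * (2 : ℝ≥0∞) ^ ((n : ℝ) * ((j' : ℝ) - (j : ℝ))) *
                maxFn n (waveletSum n c j') x :=
  sum_le_maximal_of_lt_general n N hN
end

section
/- Let n ≥ 1, let 0 < a < b be real numbers, let N ∈ ℕ, and let l, l', l'' ∈ {1,…,n}. For every Schwartz function ψ : ℝⁿ → ℂ whose Fourier transform 𝓕ψ vanishes at every ξ with ‖ξ‖ < a or ‖ξ‖ > b, there exist constants C > 0 and c > 0 such that for every t ≥ 0 and every x ∈ ℝⁿ: |∫_{ℝⁿ} e^{−t‖ξ‖²} · (ξ_l ξ_{l'} ξ_{l''} / ‖ξ‖²) · (𝓕ψ)(ξ) e^{2πi⟨x,ξ⟩} dξ| ≤ C · e^{−c t} · (1 + ‖x‖)^{−N}. (That is, the operator e^{tΔ}∂_{x_l}∂_{x_{l'}}∂_{x_{l''}}(−Δ)^{−1}, realized as a Fourier multiplier, applied to a frequency-annulus-localized Schwartz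 function decays exponentially in time and polynomially in space.) -/
/-!
On the Fourier side the integrand is `e^{-t‖ξ‖²} h(ξ) e^{2πi⟨x,ξ⟩}`, where
`h = (ξ_l ξ_{l'} ξ_{l''} / ‖ξ‖²) 𝓕ψ` is smooth (the multiplier is smooth away from `0`) and
supported in the annulus `a ≤ ‖ξ‖ ≤ b`; so the integral is the inverse Fourier transform of the
Schwartz function `e^{-t‖ξ‖²} h`. Where `‖ξ‖ ≥ a`, every derivative of the Gaussian is
`O((1 + t)^m e^{-a²t})` with polynomial growth in `ξ`, hence the family `e^{a²t/2} e^{-t‖ξ‖²} h`,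
`t ≥ 0`, is bounded in Schwartz space. The inverse Fourier transform is continuous, so it maps
this family to a bounded one, and a bounded family of Schwartz functions decays uniformly like
`(1 + ‖x‖)^{-N}`.
-/

open MeasureTheory

open scoped ContDiff Nat SchwartzMap FourierTransform

theorem norm_iteratedFDeriv_smul_le_of_le {E F : Type*} [NormedAddCommGroup E] [NormedSpace ℝ E]
    [NormedAddCommGroup F] [NormedSpace ℝ F] {f : E → ℝ} {g : E → F}
    (hf : ContDiff ℝ ∞ f) (hg : ContDiff ℝ ∞ g) (x : E) {m : ℕ} {A B : ℝ}
    (hA : ∀ i ≤ m, ‖iteratedFDeriv ℝ i f x‖ ≤ A) (hB : ∀ i ≤ m, ‖iteratedFDeriv ℝ i g x‖ ≤ B) :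
    ‖iteratedFDeriv ℝ m (fun y => f y • g y) x‖ ≤ 2 ^ m * A * B := by
  have hA0 : 0 ≤ A := (norm_nonneg _).trans (hA 0 (Nat.zero_le m))
  calc _ ≤ ∑ i ∈ Finset.range (m + 1), (m.choose i : ℝ) * ‖iteratedFDeriv ℝ i f x‖ *
        ‖iteratedFDeriv ℝ (m - i) g x‖ := norm_iteratedFDeriv_smul_le hf hg x (mod_cast le_top)
    _ ≤ ∑ i ∈ Finset.range (m + 1), (m.choose i : ℝ) * A * B := by
        gcongr with i hi
        · exact hA i (Finset.mem_range_succ_iff.mp hi)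
        · exact hB _ (Nat.sub_le m i)
    _ = 2 ^ m * A * B := by
        rw [← Finset.sum_mul, ← Finset.sum_mul, ← Nat.cast_sum, Nat.sum_range_choose]
        push_cast; ring

theorem one_add_pow_le_mul_exp {ε : ℝ} (hε : 0 < ε) (m : ℕ) :
    ∃ K, 0 < K ∧ ∀ t, 0 ≤ t → (1 + t) ^ m ≤ K * Real.exp (ε * t) := by
  refine ⟨m ! / ε ^ m * Real.exp ε, by positivity, fun t ht => ?_⟩
  have := Real.pow_div_factorial_le_exp (x := ε * (1 + t)) (by positivity) m
  rw [div_le_iff₀ (by positivity), mul_pow, mul_add, mul_one, Real.exp_add] at this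
  rw [← mul_le_mul_iff_right₀ (pow_pos hε m)]
  calc _ ≤ _ := this
    _ = _ := by field_simp

theorem SchwartzMap.exists_one_add_pow_mul_norm_le_of_isVonNBounded {E F : Type*}
    [NormedAddCommGroup E] [NormedSpace ℝ E] [NormedAddCommGroup F] [NormedSpace ℝ F]
    {s : Set 𝓢(E, F)} (hs : Bornology.IsVonNBounded ℝ s) (N : ℕ) :
    ∃ C, 0 < C ∧ ∀ f ∈ s, ∀ x, (1 + ‖x‖) ^ N * ‖f x‖ ≤ C := by
  obtain ⟨r, hr, hbound⟩ :=
    (schwartz_withSeminorms ℝ E F).isVonNBounded_iff_finset_seminorm_bounded.mp hs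
      (Finset.Iic (N, 0))
  refine ⟨2 ^ N * r, by positivity, fun f hf x => ?_⟩
  have := SchwartzMap.one_add_le_sup_seminorm_apply (𝕜 := ℝ) (m := (N, 0)) le_rfl le_rfl f x
  rw [norm_iteratedFDeriv_zero] at this
  exact this.trans (mul_le_mul_of_nonneg_left (hbound f hf).le (by positivity))

section Gaussian

variable {E : Type*} [NormedAddCommGroup E] [InnerProductSpace ℝ E]

theorem norm_iteratedFDeriv_exp_neg_mul {t : ℝ} (ht : 0 ≤ t) (i : ℕ) (s : ℝ) :
    ‖iteratedFDeriv ℝ i (fun s => Real.exp (-t * s)) s‖ = t ^ i * Real.exp (-t * s) := by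
  rw [norm_iteratedFDeriv_eq_norm_iteratedDeriv, iteratedDeriv_exp_const_mul, norm_mul,
    norm_pow, Real.norm_of_nonneg (Real.exp_pos _).le, norm_neg, Real.norm_of_nonneg ht]

/-- Faà di Bruno applied to `s ↦ e^{-ts}` composed with the temperate function `‖·‖²`. -/
theorem exists_norm_iteratedFDeriv_exp_neg_mul_norm_sq_le (m : ℕ) :
    ∃ (C : ℝ) (k : ℕ), 0 ≤ C ∧ ∀ t, 0 ≤ t → ∀ i ≤ m, ∀ ξ : E,
      ‖iteratedFDeriv ℝ i (fun y : E => Real.exp (-(t * ‖y‖ ^ 2))) ξ‖ ≤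
        C * (1 + t) ^ m * (1 + ‖ξ‖) ^ k * Real.exp (-(t * ‖ξ‖ ^ 2)) := by
  obtain ⟨k, C₀, hC₀, hq⟩ :=
    (Function.hasTemperateGrowth_norm_sq E).norm_iteratedFDeriv_le_uniform m
  refine ⟨m ! * (1 + C₀) ^ m, k * m, by positivity, fun t ht i hi ξ => ?_⟩
  set D := (1 + C₀) * (1 + ‖ξ‖) ^ k
  have hD : 1 ≤ D := one_le_mul_of_one_le_of_one_le (by linarith)
    (one_le_pow₀ (by linarith [norm_nonneg ξ]))
  have hcomp : (fun y : E => Real.exp (-(t * ‖y‖ ^ 2))) =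
      (fun s => Real.exp (-t * s)) ∘ (fun y : E => ‖y‖ ^ 2) := by
    funext y; simp [neg_mul]
  have hg : ∀ j ≤ i, ‖iteratedFDeriv ℝ j (fun s => Real.exp (-t * s)) (‖ξ‖ ^ 2)‖ ≤
      (1 + t) ^ m * Real.exp (-(t * ‖ξ‖ ^ 2)) := fun j hj => by
    rw [norm_iteratedFDeriv_exp_neg_mul ht, neg_mul]
    gcongr
    calc t ^ j ≤ (1 + t) ^ j := by gcongr; linarith
      _ ≤ (1 + t) ^ m := pow_le_pow_right₀ (by linarith) (hj.trans hi)
  have hq' : ∀ j, 1 ≤ j → j ≤ i → ‖iteratedFDeriv ℝ j (fun y : E => ‖y‖ ^ 2) ξ‖ ≤ D ^ j :=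
    fun j hj hji => calc
      _ ≤ C₀ * (1 + ‖ξ‖) ^ k := hq j (hji.trans hi) ξ
      _ ≤ D := mul_le_mul_of_nonneg_right (by linarith) (by positivity)
      _ ≤ D ^ j := le_self_pow₀ hD (by omega)
  rw [hcomp]
  calc _ ≤ i ! * ((1 + t) ^ m * Real.exp (-(t * ‖ξ‖ ^ 2))) * D ^ i :=
        norm_iteratedFDeriv_comp_le (by fun_prop) (contDiff_norm_sq ℝ)
          (mod_cast le_top) ξ hg hq'
    _ ≤ m ! * ((1 + t) ^ m * Real.exp (-(t * ‖ξ‖ ^ 2))) * D ^ m := by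
        gcongr
    _ = _ := by rw [mul_pow, ← pow_mul]; ring

theorem hasTemperateGrowth_exp_neg_mul_norm_sq {t : ℝ} (ht : 0 ≤ t) :
    (fun y : E => Real.exp (-(t * ‖y‖ ^ 2))).HasTemperateGrowth := by
  refine ⟨(contDiff_norm_sq ℝ).const_smul t |>.neg.exp, fun m => ?_⟩
  obtain ⟨C, k, hC, hbound⟩ := exists_norm_iteratedFDeriv_exp_neg_mul_norm_sq_le (E := E) m
  refine ⟨k, C * (1 + t) ^ m, fun ξ => (hbound t ht m le_rfl ξ).trans ?_⟩
  have : Real.exp (-(t * ‖ξ‖ ^ 2)) ≤ 1 := Real.exp_le_one_iff.mpr (by nlinarith [sq_nonneg ‖ξ‖])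
  calc _ ≤ C * (1 + t) ^ m * (1 + ‖ξ‖) ^ k * 1 := by gcongr
    _ = _ := by ring

end Gaussian

section Heat

variable {E : Type*} [NormedAddCommGroup E] [InnerProductSpace ℝ E]

/-- `smulLeftCLM` makes this `0` for `t < 0`, where the Gaussian does not have temperate
growth. -/
noncomputable def heatMulCLM (t : ℝ) : 𝓢(E, ℂ) →L[ℝ] 𝓢(E, ℂ) :=
  SchwartzMap.smulLeftCLM ℂ fun ξ : E => Real.exp (-(t * ‖ξ‖ ^ 2))

theorem heatMulCLM_apply {t : ℝ} (ht : 0 ≤ t) (f : 𝓢(E, ℂ)) (ξ : E) :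
    heatMulCLM t f ξ = Real.exp (-(t * ‖ξ‖ ^ 2)) • f ξ :=
  SchwartzMap.smulLeftCLM_apply_apply (hasTemperateGrowth_exp_neg_mul_norm_sq ht) f ξ

theorem tsupport_heatMulCLM_subset {t : ℝ} (ht : 0 ≤ t) (f : 𝓢(E, ℂ)) :
    tsupport (heatMulCLM t f) ⊆ tsupport f := by
  rw [show ⇑(heatMulCLM t f) = fun ξ => Real.exp (-(t * ‖ξ‖ ^ 2)) • f ξ from
    funext (heatMulCLM_apply ht f)]
  exact tsupport_smul_subset_right _ _

/-- On `‖ξ‖ ≥ a` the Gaussian is at most `e^{-a²t}`, and its polynomial growth in `ξ` is absorbed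
by the Schwartz seminorms of `f`. -/
theorem exists_seminorm_heatMulCLM_le {f : 𝓢(E, ℂ)} {a : ℝ} (ha : 0 ≤ a)
    (hf : tsupport f ⊆ {ξ | a ≤ ‖ξ‖}) (j m : ℕ) :
    ∃ K, 0 ≤ K ∧ ∀ t, 0 ≤ t →
      SchwartzMap.seminorm ℝ j m (heatMulCLM t f) ≤ K * (1 + t) ^ m * Real.exp (-(a ^ 2 * t)) := by
  obtain ⟨C, k, hC, hgauss⟩ := exists_norm_iteratedFDeriv_exp_neg_mul_norm_sq_le (E := E) m
  set S := (Finset.Iic (k + j, m)).sup (fun p => SchwartzMap.seminorm ℝ p.1 p.2) f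
  refine ⟨2 ^ m * C * 2 ^ (k + j) * S, by positivity, fun t ht => ?_⟩
  refine SchwartzMap.seminorm_le_bound ℝ j m _ (by positivity) fun ξ => ?_
  by_cases hξ : ξ ∈ tsupport f
  swap
  · rw [image_eq_zero_of_notMem_tsupport fun h => hξ <|
      tsupport_heatMulCLM_subset ht f (tsupport_iteratedFDeriv_subset m h)]
    simp only [norm_zero, mul_zero]
    positivity
  have hexp : Real.exp (-(t * ‖ξ‖ ^ 2)) ≤ Real.exp (-(a ^ 2 * t)) := by
    rw [mul_comm (a ^ 2)]
    gcongr
    exact hf hξ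
  have hA : ∀ i ≤ m, ‖iteratedFDeriv ℝ i (fun y : E => Real.exp (-(t * ‖y‖ ^ 2))) ξ‖ ≤
      C * (1 + t) ^ m * (1 + ‖ξ‖) ^ k * Real.exp (-(a ^ 2 * t)) := fun i hi =>
    (hgauss t ht i hi ξ).trans (by gcongr)
  have hB : ∀ i ≤ m, ‖iteratedFDeriv ℝ i f ξ‖ ≤ 2 ^ (k + j) * S / (1 + ‖ξ‖) ^ (k + j) :=
    fun i hi => by
      rw [le_div_iff₀ (by positivity), mul_comm]
      exact SchwartzMap.one_add_le_sup_seminorm_apply (m := (k + j, m)) le_rfl hi f ξ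
  rw [show ⇑(heatMulCLM t f) = fun ξ => Real.exp (-(t * ‖ξ‖ ^ 2)) • f ξ from
    funext (heatMulCLM_apply ht f)]
  have hweight : ‖ξ‖ ^ j * (1 + ‖ξ‖) ^ k / (1 + ‖ξ‖) ^ (k + j) ≤ 1 := by
    rw [div_le_one (by positivity), pow_add, mul_comm]
    gcongr
    linarith
  calc _ ≤ ‖ξ‖ ^ j * (2 ^ m * (C * (1 + t) ^ m * (1 + ‖ξ‖) ^ k * Real.exp (-(a ^ 2 * t))) *
          (2 ^ (k + j) * S / (1 + ‖ξ‖) ^ (k + j))) := by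
        gcongr
        exact norm_iteratedFDeriv_smul_le_of_le
          (contDiff_const.mul (contDiff_norm_sq ℝ)).neg.exp (f.smooth ⊤) ξ hA hB
    _ = 2 ^ m * C * 2 ^ (k + j) * S * (1 + t) ^ m * Real.exp (-(a ^ 2 * t)) *
          (‖ξ‖ ^ j * (1 + ‖ξ‖) ^ k / (1 + ‖ξ‖) ^ (k + j)) := by ring
    _ ≤ _ := by grw [hweight, mul_one]

theorem isVonNBounded_exp_smul_heatMulCLM {f : 𝓢(E, ℂ)} {a c : ℝ} (ha : 0 ≤ a)
    (hf : tsupport f ⊆ {ξ | a ≤ ‖ξ‖}) (hc : c < a ^ 2) :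
    Bornology.IsVonNBounded ℝ ((fun t => Real.exp (c * t) • heatMulCLM t f) '' Set.Ici 0) := by
  rw [(schwartz_withSeminorms ℝ E ℂ).image_isVonNBounded_iff_seminorm_bounded]
  rintro ⟨j, m⟩
  obtain ⟨K, hK, hseminorm⟩ := exists_seminorm_heatMulCLM_le ha hf j m
  obtain ⟨L, hL0, hL⟩ := one_add_pow_le_mul_exp (sub_pos.mpr hc) m
  refine ⟨K * L + 1, by positivity, fun t (ht : 0 ≤ t) => ?_⟩
  calc SchwartzMap.seminorm ℝ j m (Real.exp (c * t) • heatMulCLM t f)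
      = Real.exp (c * t) * SchwartzMap.seminorm ℝ j m (heatMulCLM t f) := by
        rw [map_smul_eq_mul, Real.norm_of_nonneg (Real.exp_pos _).le]
    _ ≤ Real.exp (c * t) * (K * (L * Real.exp ((a ^ 2 - c) * t)) * Real.exp (-(a ^ 2 * t))) := by
        grw [hseminorm t ht, hL t ht]
    _ = K * L := by
        have : Real.exp (c * t) * Real.exp ((a ^ 2 - c) * t) * Real.exp (-(a ^ 2 * t)) = 1 := by
          rw [← Real.exp_add, ← Real.exp_add, ← Real.exp_zero]; ring_nf
        linear_combination K * L * this
    _ < K * L + 1 := lt_add_one _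

end Heat

section Fourier

variable {E : Type*} [NormedAddCommGroup E] [InnerProductSpace ℝ E] [FiniteDimensional ℝ E]
  [MeasurableSpace E] [BorelSpace E]

theorem exists_norm_fourierInv_heatMulCLM_le {f : 𝓢(E, ℂ)} {a c : ℝ} (ha : 0 ≤ a)
    (hf : tsupport f ⊆ {ξ | a ≤ ‖ξ‖}) (hc : c < a ^ 2) (N : ℕ) :
    ∃ C, 0 < C ∧ ∀ t, 0 ≤ t → ∀ x : E,
      ‖𝓕⁻ (heatMulCLM t f) x‖ ≤ C * Real.exp (-(c * t)) * (1 + ‖x‖) ^ (-(N : ℝ)) := by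
  obtain ⟨C, hC0, hC⟩ := SchwartzMap.exists_one_add_pow_mul_norm_le_of_isVonNBounded
    ((isVonNBounded_exp_smul_heatMulCLM ha hf hc).image
      (FourierTransform.fourierInvCLM ℝ 𝓢(E, ℂ))) N
  refine ⟨C, hC0, fun t ht x => ?_⟩
  have hx := hC _ ⟨_, ⟨t, ht, rfl⟩, rfl⟩ x
  rw [map_smul, FourierTransform.fourierInvCLM_apply, smul_apply, norm_smul,
    Real.norm_of_nonneg (Real.exp_pos _).le] at hx
  rw [Real.rpow_neg (by positivity), Real.rpow_natCast, Real.exp_neg, mul_assoc,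
    ← mul_inv, ← div_eq_mul_inv, le_div_iff₀ (by positivity)]
  linarith

end Fourier

theorem exists_schwartzMap_eq_mul_of_eq_zero {E : Type*} [NormedAddCommGroup E]
    [InnerProductSpace ℝ E] [ProperSpace E] {f : 𝓢(E, ℂ)} {μ : E → ℂ} {a b : ℝ} (ha : 0 < a)
    (hμ : ∀ ξ, ξ ≠ 0 → ContDiffAt ℝ ∞ μ ξ) (hf : ∀ ξ, (‖ξ‖ < a ∨ b < ‖ξ‖) → f ξ = 0) :
    ∃ g : 𝓢(E, ℂ), (∀ ξ, g ξ = μ ξ * f ξ) ∧ tsupport g ⊆ {ξ | a ≤ ‖ξ‖} := by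
  have hzero : ∀ ξ, (‖ξ‖ < a ∨ b < ‖ξ‖) → μ ξ * f ξ = 0 := fun ξ hξ => by rw [hf ξ hξ, mul_zero]
  have hsmooth : ContDiff ℝ ∞ (fun ξ => μ ξ * f ξ) := by
    refine contDiff_iff_contDiffAt.mpr fun ξ => ?_
    by_cases hξ : ‖ξ‖ < a
    · exact contDiffAt_const.congr_of_eventuallyEq (Filter.eventuallyEq_of_mem
        ((isOpen_lt continuous_norm continuous_const).mem_nhds hξ) fun y hy => hzero y (.inl hy))
    · exact (hμ ξ (norm_pos_iff.mp (ha.trans_le (not_lt.mp hξ)))).mul (f.smooth ⊤).contDiffAt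
  have hsupp : tsupport (fun ξ => μ ξ * f ξ) ⊆ {ξ | a ≤ ‖ξ‖ ∧ ‖ξ‖ ≤ b} := by
    refine closure_minimal (fun ξ hξ => ?_) ((isClosed_le continuous_const continuous_norm).inter
      (isClosed_le continuous_norm continuous_const))
    by_contra h
    exact hξ (hzero ξ (by simp only [Set.mem_ofPred_eq, not_and_or, not_le] at h; exact h))
  have hcompact : HasCompactSupport (fun ξ => μ ξ * f ξ) :=
    (isCompact_closedBall 0 b).of_isClosed_subset (isClosed_tsupport _) fun ξ hξ =>
      mem_closedBall_zero_iff.mpr (hsupp hξ).2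
  exact ⟨hcompact.toSchwartzMap hsmooth, fun _ => rfl, fun ξ hξ => (hsupp hξ).1⟩

theorem heat_riesz_annulus_decay_general (n : ℕ) (a b : ℝ) (ha : 0 < a)
    (N : ℕ) (l l' l'' : Fin n) (ψ : SchwartzMap (EuclideanSpace ℝ (Fin n)) ℂ)
    (hsupp : ∀ ξ : EuclideanSpace ℝ (Fin n), (‖ξ‖ < a ∨ b < ‖ξ‖) →
      VectorFourier.fourierIntegral Real.fourierChar volume (innerₗ (EuclideanSpace ℝ (Fin n))) (⇑ψ) ξ = 0) :
    ∃ C c : ℝ, 0 < C ∧ 0 < c ∧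
      ∀ t : ℝ, 0 ≤ t → ∀ x : EuclideanSpace ℝ (Fin n),
        ‖∫ ξ : EuclideanSpace ℝ (Fin n),
            Real.exp (-(t * ‖ξ‖ ^ 2)) •
              (((ξ l * ξ l' * ξ l'' / ‖ξ‖ ^ 2 : ℝ) : ℂ) *
                VectorFourier.fourierIntegral Real.fourierChar volume (innerₗ (EuclideanSpace ℝ (Fin n))) (⇑ψ) ξ *
                Complex.exp (2 * (Real.pi : ℂ) * Complex.I * ((inner ℝ x ξ : ℝ) : ℂ)))‖
          ≤ C * Real.exp (-(c * t)) * (1 + ‖x‖) ^ (-(N : ℝ)) := by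
  have hriesz : ∀ ξ : EuclideanSpace ℝ (Fin n), ξ ≠ 0 → ContDiffAt ℝ ∞
      (fun ξ : EuclideanSpace ℝ (Fin n) => ((ξ l * ξ l' * ξ l'' / ‖ξ‖ ^ 2 : ℝ) : ℂ)) ξ :=
    fun ξ hξ => Complex.ofRealCLM.contDiff.contDiffAt.comp ξ <| ContDiffAt.div (by fun_prop)
      (contDiff_norm_sq ℝ).contDiffAt (by positivity)
  have hF : ∀ ξ, 𝓕 ψ ξ = VectorFourier.fourierIntegral Real.fourierChar volume
      (innerₗ (EuclideanSpace ℝ (Fin n))) (⇑ψ) ξ := fun _ => rfl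
  obtain ⟨h, hh, hh_supp⟩ := exists_schwartzMap_eq_mul_of_eq_zero (f := 𝓕 ψ) ha hriesz hsupp
  obtain ⟨C, hC, hdecay⟩ := exists_norm_fourierInv_heatMulCLM_le ha.le hh_supp
    (c := a ^ 2 / 2) (by nlinarith) N
  refine ⟨C, a ^ 2 / 2, hC, by positivity, fun t ht x => le_of_eq_of_le ?_ (hdecay t ht x)⟩
  rw [SchwartzMap.fourierInv_coe, Real.fourierInv_eq]
  congr 2
  funext ξ
  rw [heatMulCLM_apply ht, hh, hF, Circle.smul_def, Real.fourierChar_apply, real_inner_comm]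
  simp only [smul_eq_mul, Complex.real_smul]
  push_cast
  ring_nf

/-- Lemma 4.1 (second set of estimates): the operator
`e^{tΔ} ∂_{x_l} ∂_{x_{l'}} ∂_{x_{l''}} (-Δ)^{-1}`, realized as the Fourier multiplier
`e^{-t‖ξ‖²} ξ_l ξ_{l'} ξ_{l''} / ‖ξ‖²`, applied to a frequency-annulus-localized Schwartz
function decays exponentially in time and polynomially in space of any order `N`. -/
theorem heat_riesz_annulus_decay (n : ℕ) (hn : 1 ≤ n) (a b : ℝ) (ha : 0 < a) (hab : a < b)
    (N : ℕ) (l l' l'' : Fin n) (ψ : SchwartzMap (EuclideanSpace ℝ (Fin n)) ℂ)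
    (hsupp : ∀ ξ : EuclideanSpace ℝ (Fin n), (‖ξ‖ < a ∨ b < ‖ξ‖) →
      VectorFourier.fourierIntegral Real.fourierChar volume (innerₗ (EuclideanSpace ℝ (Fin n))) (⇑ψ) ξ = 0) :
    ∃ C c : ℝ, 0 < C ∧ 0 < c ∧
      ∀ t : ℝ, 0 ≤ t → ∀ x : EuclideanSpace ℝ (Fin n),
        ‖∫ ξ : EuclideanSpace ℝ (Fin n),
            Real.exp (-(t * ‖ξ‖ ^ 2)) •
              (((ξ l * ξ l' * ξ l'' / ‖ξ‖ ^ 2 : ℝ) : ℂ) *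
                VectorFourier.fourierIntegral Real.fourierChar volume (innerₗ (EuclideanSpace ℝ (Fin n))) (⇑ψ) ξ *
                Complex.exp (2 * (Real.pi : ℂ) * Complex.I * ((inner ℝ x ξ : ℝ) : ℂ)))‖
          ≤ C * Real.exp (-(c * t)) * (1 + ‖x‖) ^ (-(N : ℝ)) :=
  heat_riesz_annulus_decay_general n a b ha N l l' l'' ψ hsupp
end

section
/- Let n ≥ 1, 1 < p < ∞, 1 ≤ q < ∞, m > 0, c₀ > 0, and C₀ > 0. Let (G_j)_{j∈ℤ} and (F_{j,j_t})_{j,j_t∈ℤ} be families of measurable functions ℝⁿ → [0,∞] such that for all j_t ∈ ℤ, all j ≥ j_t, and every x ∈ ℝⁿ, F_{j,j_t}(x) ≤ C₀ · e^{−c₀·4^{(j−j_t)}} · Σ_{j'∈ℤ, |j−j'|≤1} M G_{j'}(x). Then there exists a constant C > 0, depending only on n, p, q, m, c₀, C₀, such that sup_{j_t∈ℤ} Σ_{j≥j_t} ( 2^{2(j−j_t)m} · 2^{j(n/p−1)} · ‖F_{j,j_t}‖_{L^{p,∞}} )^q ≤ C · Σ_{j'∈ℤ} ( 2^{j'(n/p−1)}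 · ‖G_{j'}‖_{L^{p,∞}} )^q. -/
/-!
For `j ≥ j_t`, the pointwise hypothesis, the quasi-triangle inequality for the weak-`L^p`
quasinorm and the weak-type `(p, p)` bound for the maximal function give
`‖F_{j,j_t}‖ ≲ e^{-c₀ 4^{j-j_t}} ∑_{|j'-j| ≤ 1} ‖G_{j'}‖`. The Gaussian factor absorbs the growth,
`2^{2km} e^{-c₀ 4^k} ≤ e^{m²/c₀}`, and neighbouring weights `2^{j(n/p-1)}` differ by at most
`2^{|n/p-1|}`; after raising to the power `q` and summing over `j`, each `G_{j'}` is counted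
three times.

The weak-type `(p, p)` bound for `M` applies the Vitali weak `(1, 1)` bound to `g 1_{g > λ/2}`,
whose integral is controlled by the dyadic level sets `{g > 2^k λ/2}` of `g`.
-/

open MeasureTheory ENNReal

/-- The weak-`L^p` quasinorm `sup_{λ>0} λ |{x : h x > λ}|^{1/p}` of `h : ℝⁿ → [0,∞]`. -/
noncomputable def wLp (n : ℕ) (p : ℝ) (h : EuclideanSpace ℝ (Fin n) → ℝ≥0∞) : ℝ≥0∞ :=
  ⨆ (l : NNReal) (_ : 0 < l), (l : ℝ≥0∞) * (volume {x | (l : ℝ≥0∞) < h x}) ^ (1 / p)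

open Metric Set
open scoped Finset

theorem Real.two_rpow_mul_exp_neg_le {m c₀ x : ℝ} (hc₀ : 0 < c₀) (hx : 0 ≤ x) :
    (2 : ℝ) ^ (2 * x * m) * exp (-(c₀ * 4 ^ x)) ≤ exp (m ^ 2 / c₀) := by
  set u := x * log 2
  have hu : 0 ≤ u := mul_nonneg hx (log_nonneg one_le_two)
  have h2 : (2 : ℝ) ^ (2 * x * m) = exp (2 * m * u) := by
    rw [rpow_def_of_pos two_pos, show 2 * m * u = log 2 * (2 * x * m) by ring]
  have h4 : u ^ 2 ≤ 4 ^ x := by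
    have hexp : u ≤ 2 ^ x := by
      rw [rpow_def_of_pos two_pos, mul_comm]
      linarith [add_one_le_exp u]
    rw [show (4 : ℝ) = 2 ^ (2 : ℝ) by norm_num, ← rpow_mul zero_le_two, mul_comm,
      rpow_mul zero_le_two, rpow_two]
    gcongr
  rw [h2, ← exp_add]
  refine exp_le_exp.2 ((le_div_iff₀ hc₀).2 ?_)
  -- complete the square: `2 m u - c₀ u² ≤ m² / c₀`, and `u² ≤ 4 ^ x`
  nlinarith [sq_nonneg (c₀ * u - m), mul_le_mul_of_nonneg_left h4 (mul_pos hc₀ hc₀).le]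

namespace ENNReal

theorem rpow_sum_le_sum_rpow {ι : Type*} (s : Finset ι) (f : ι → ℝ≥0∞) {r : ℝ}
    (hr₀ : 0 < r) (hr₁ : r ≤ 1) : (∑ i ∈ s, f i) ^ r ≤ ∑ i ∈ s, f i ^ r := by
  classical
  induction s using Finset.induction_on with
  | empty => simp [hr₀]
  | insert i s hi ih =>
    rw [Finset.sum_insert hi, Finset.sum_insert hi]
    exact (rpow_add_le_add_rpow _ _ hr₀.le hr₁).trans (by gcongr)

theorem exists_two_pow_mul_lt_le {α t : ℝ≥0∞} (hα : α ≠ 0) (hαt : α < t) (ht : t ≠ ∞) :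
    ∃ k : ℕ, 2 ^ k * α < t ∧ t ≤ 2 ^ (k + 1) * α := by
  have hex : ∃ K : ℕ, t ≤ 2 ^ K * α := by
    obtain ⟨N, hN⟩ := ENNReal.exists_nat_gt (ENNReal.div_ne_top ht hα)
    refine ⟨N, ((ENNReal.div_lt_iff (.inl hα) (.inl hαt.ne_top)).1 hN).le.trans ?_⟩
    gcongr
    exact_mod_cast (Nat.lt_two_pow_self (n := N)).le
  obtain ⟨k, hk⟩ : ∃ k, Nat.find hex = k + 1 :=
    Nat.exists_eq_add_one.2 <| Nat.pos_of_ne_zero fun h0 => by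
      have := Nat.find_spec hex
      rw [h0, pow_zero, one_mul] at this
      exact this.not_gt hαt
  exact ⟨k, not_le.1 (Nat.find_min hex (by omega)), hk ▸ Nat.find_spec hex⟩

theorem two_pow_succ_mul_mul_div_rpow (α W : ℝ≥0∞) {p : ℝ} (hp : 0 ≤ p) (k : ℕ) :
    2 ^ (k + 1) * α * (W / (2 ^ k * α)) ^ p = 2 * (α * (W / α) ^ p) * (2 ^ (1 - p)) ^ k := by
  have h2 : (2 : ℝ≥0∞) ^ (1 - p) = 2 * (2 ^ p)⁻¹ := by
    rw [ENNReal.rpow_sub _ _ two_ne_zero ENNReal.ofNat_ne_top, ENNReal.rpow_one, div_eq_mul_inv]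
  rw [div_eq_mul_inv, ENNReal.mul_inv (.inl (pow_ne_zero _ two_ne_zero))
      (.inl (ENNReal.pow_ne_top ENNReal.ofNat_ne_top)), mul_left_comm, ← div_eq_mul_inv,
    ENNReal.mul_rpow_of_nonneg _ _ hp, ENNReal.inv_rpow, ← ENNReal.rpow_natCast 2 k,
    ← ENNReal.rpow_mul, mul_comm (k : ℝ), ENNReal.rpow_mul, ENNReal.rpow_natCast,
    ENNReal.inv_pow, h2, mul_pow]
  ring

theorem two_rpow_mul_le_of_abs_sub_le_one {a b : ℝ} (hab : |a - b| ≤ 1) (σ : ℝ) :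
    (2 : ℝ≥0∞) ^ (a * σ) ≤ 2 ^ |σ| * 2 ^ (b * σ) := by
  rw [← ENNReal.rpow_add _ _ two_ne_zero ENNReal.ofNat_ne_top]
  refine ENNReal.rpow_le_rpow_of_exponent_le one_le_two ?_
  have : (a - b) * σ ≤ |σ| := by
    calc (a - b) * σ ≤ |a - b| * |σ| := by rw [← abs_mul]; exact le_abs_self _
      _ ≤ |σ| := mul_le_of_le_one_left (abs_nonneg σ) hab
  linarith

theorem two_rpow_mul_ofReal_exp_neg_le {m c₀ : ℝ} (hc₀ : 0 < c₀) {k : ℤ} (hk : 0 ≤ k) :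
    (2 : ℝ≥0∞) ^ (2 * (k : ℝ) * m) * ENNReal.ofReal (Real.exp (-(c₀ * (4 : ℝ) ^ k))) ≤
      ENNReal.ofReal (Real.exp (m ^ 2 / c₀)) := by
  rw [← ENNReal.ofReal_ofNat 2, ENNReal.ofReal_rpow_of_pos two_pos,
    ← ENNReal.ofReal_mul (by positivity), ← Real.rpow_intCast]
  exact ENNReal.ofReal_le_ofReal (Real.two_rpow_mul_exp_neg_le hc₀ (Int.cast_nonneg hk))

theorem exists_pos_nnreal_le_mul {a b c : ℝ≥0∞} (hc : c ≠ ∞) (h : a ≤ c * b) :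
    ∃ C : NNReal, 0 < C ∧ a ≤ C * b :=
  ⟨c.toNNReal + 1, by positivity, h.trans (by gcongr; simp [ENNReal.coe_toNNReal hc])⟩

theorem tsum_sum_comp_add {s : Finset ℤ} (a : ℤ → ℝ≥0∞) :
    ∑' j, ∑ d ∈ s, a (j + d) = #s * ∑' j, a j := by
  rw [Summable.tsum_finsetSum fun _ _ => ENNReal.summable]
  calc ∑ d ∈ s, ∑' j, a (j + d) = ∑ _d ∈ s, ∑' j, a j :=
        Finset.sum_congr rfl fun d _ => (Equiv.addRight d).tsum_eq a
    _ = #s * ∑' j, a j := by rw [Finset.sum_const, nsmul_eq_mul]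

end ENNReal

theorem tsum_subtype_abs_sub_le_one {M : Type*} [AddCommMonoid M] [TopologicalSpace M]
    (f : ℤ → M) (j : ℤ) :
    ∑' j' : {j' : ℤ // |j - j'| ≤ 1}, f j' = ∑ d ∈ Finset.Icc (-1 : ℤ) 1, f (j + d) := by
  let e : {j' : ℤ // |j - j'| ≤ 1} ≃ {d // d ∈ Finset.Icc (-1 : ℤ) 1} :=
    { toFun := fun j' => ⟨j' - j, by have := abs_le.1 j'.2; simp only [Finset.mem_Icc]; omega⟩
      invFun := fun d => ⟨j + d, by have := Finset.mem_Icc.1 d.2; rw [abs_le]; omega⟩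
      left_inv := fun j' => by ext; simp
      right_inv := fun d => by ext; simp }
  rw [← Finset.tsum_subtype, ← e.tsum_eq]
  simp [e]

theorem indicator_le_tsum_indicator_two_pow {X : Type*} (g : X → ℝ≥0∞) {α : ℝ≥0∞} (hα : α ≠ 0)
    (hα_top : α ≠ ∞) (y : X) :
    {y | α < g y}.indicator g y ≤
      ∑' k : ℕ, {y | 2 ^ k * α < g y}.indicator (fun _ => 2 ^ (k + 1) * α) y := by
  by_cases hy : α < g y
  swap
  · simp [hy]
  rw [indicator_of_mem (show y ∈ {y | α < g y} from hy)]
  rcases eq_or_ne (g y) ∞ with hgy | hgy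
  · have hmem (k : ℕ) : y ∈ {y | 2 ^ k * α < g y} := by
      simp [hgy, ENNReal.mul_lt_top (ENNReal.pow_lt_top ENNReal.ofNat_lt_top) hα_top.lt_top]
    rw [hgy, ← ENNReal.tsum_const_eq_top_of_ne_zero (α := ℕ) hα]
    refine ENNReal.tsum_le_tsum fun k => ?_
    rw [indicator_of_mem (hmem k)]
    exact le_mul_of_one_le_left' (one_le_pow₀ one_le_two)
  obtain ⟨k, hk, hk'⟩ := ENNReal.exists_two_pow_mul_lt_le hα hy hgy
  calc g y ≤ {y | 2 ^ k * α < g y}.indicator (fun _ => 2 ^ (k + 1) * α) y := by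
        rwa [indicator_of_mem (show y ∈ {y | 2 ^ k * α < g y} from hk)]
    _ ≤ _ := ENNReal.le_tsum k

theorem MeasureTheory.Measure.addHaar_closedBall_mul_eq {E : Type*} [NormedAddCommGroup E]
    [NormedSpace ℝ E] [MeasurableSpace E] [BorelSpace E] [FiniteDimensional ℝ E] [Nontrivial E]
    (μ : Measure E) [μ.IsAddHaarMeasure] (x : E) {s : ℝ} (hs : 0 < s) (r : ℝ) :
    μ (closedBall x (s * r)) = ENNReal.ofReal (s ^ Module.finrank ℝ E) * μ (ball x r) := by
  rw [Measure.addHaar_closedBall_eq_addHaar_ball, Measure.addHaar_ball_mul_of_pos μ x hs,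
    Measure.addHaar_ball_center μ x]

section WeakLp

variable {n : ℕ} {p : ℝ}

theorem le_wLp (h : EuclideanSpace ℝ (Fin n) → ℝ≥0∞) {β : ℝ≥0∞} (hβ₀ : β ≠ 0) (hβ : β ≠ ∞) :
    β * volume {x | β < h x} ^ (1 / p) ≤ wLp n p h := by
  lift β to NNReal using hβ
  exact le_iSup₂_of_le (f := fun (l : NNReal) (_ : 0 < l) =>
    (l : ℝ≥0∞) * volume {x | (l : ℝ≥0∞) < h x} ^ (1 / p)) β
    (pos_iff_ne_zero.2 (by exact_mod_cast hβ₀)) le_rfl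

theorem volume_lt_le_wLp_div_rpow (hp : 0 < p) (h : EuclideanSpace ℝ (Fin n) → ℝ≥0∞)
    {β : ℝ≥0∞} (hβ₀ : β ≠ 0) (hβ : β ≠ ∞) :
    volume {x | β < h x} ≤ (wLp n p h / β) ^ p := by
  have hroot : volume {x | β < h x} ^ (1 / p) ≤ wLp n p h / β := by
    rw [ENNReal.le_div_iff_mul_le (.inl hβ₀) (.inl hβ), mul_comm]
    exact le_wLp h hβ₀ hβ
  simpa [← ENNReal.rpow_mul, hp.ne'] using ENNReal.rpow_le_rpow hroot hp.le

theorem wLp_mono (hp : 0 ≤ p) {h₁ h₂ : EuclideanSpace ℝ (Fin n) → ℝ≥0∞} (h : h₁ ≤ h₂) :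
    wLp n p h₁ ≤ wLp n p h₂ := by
  refine iSup₂_mono fun l _ => mul_le_mul_right (ENNReal.rpow_le_rpow ?_ (by positivity)) _
  exact measure_mono fun x hx => lt_of_lt_of_le hx (h x)

theorem wLp_const_mul_le (hp : 0 < p) {c : ℝ≥0∞} (hc : c ≠ ∞)
    (h : EuclideanSpace ℝ (Fin n) → ℝ≥0∞) :
    wLp n p (fun x => c * h x) ≤ c * wLp n p h := by
  refine iSup₂_le fun l hl => ?_
  rcases eq_or_ne c 0 with rfl | hc₀
  · simp [hp]
  have hl : (l : ℝ≥0∞) / c ≠ 0 := by simp [hc, hl.ne']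
  have hset : {x | (l : ℝ≥0∞) < c * h x} = {x | (l : ℝ≥0∞) / c < h x} := by
    ext x
    simp only [mem_ofPred_eq, ENNReal.div_lt_iff (.inl hc₀) (.inl hc), mul_comm]
  calc (l : ℝ≥0∞) * volume {x | (l : ℝ≥0∞) < c * h x} ^ (1 / p)
      = c * ((l / c) * volume {x | (l : ℝ≥0∞) / c < h x} ^ (1 / p)) := by
        rw [hset, ← mul_assoc, ENNReal.mul_div_cancel hc₀ hc]
    _ ≤ c * wLp n p h := by
        gcongr
        exact le_wLp h hl (ENNReal.div_ne_top ENNReal.coe_ne_top hc₀)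

theorem wLp_sum_le (hp : 1 ≤ p) {ι : Type*} (s : Finset ι)
    (h : ι → EuclideanSpace ℝ (Fin n) → ℝ≥0∞) :
    wLp n p (fun x => ∑ i ∈ s, h i x) ≤ #s * ∑ i ∈ s, wLp n p (h i) := by
  refine iSup₂_le fun l hl => ?_
  rcases s.eq_empty_or_nonempty with rfl | hs
  · simp [zero_lt_one.trans_le hp]
  set β : ℝ≥0∞ := l / #s
  have hβ₀ : β ≠ 0 := by simp [β, hl.ne']
  have hβ : β ≠ ∞ := ENNReal.div_ne_top ENNReal.coe_ne_top (by simpa using hs.ne_empty)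
  have hl_eq : (l : ℝ≥0∞) = #s * β :=
    (ENNReal.mul_div_cancel (by simpa using hs.ne_empty) (ENNReal.natCast_ne_top _)).symm
  have hcover : {x | (l : ℝ≥0∞) < ∑ i ∈ s, h i x} ⊆ ⋃ i ∈ s, {x | β < h i x} := by
    intro x hx
    by_contra hx'
    simp only [mem_iUnion, mem_ofPred_eq, not_exists, not_lt] at hx'
    refine (mem_ofPred_eq ▸ hx).not_ge ?_
    calc ∑ i ∈ s, h i x ≤ ∑ _i ∈ s, β := Finset.sum_le_sum fun i hi => hx' i hi
      _ = l := by rw [Finset.sum_const, nsmul_eq_mul, hl_eq]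
  have hr₀ : 0 < 1 / p := one_div_pos.2 (zero_lt_one.trans_le hp)
  calc (l : ℝ≥0∞) * volume {x | (l : ℝ≥0∞) < ∑ i ∈ s, h i x} ^ (1 / p)
      ≤ #s * β * (∑ i ∈ s, volume {x | β < h i x}) ^ (1 / p) := by
        rw [← hl_eq]
        gcongr
        exact (measure_mono hcover).trans (measure_biUnion_finset_le s _)
    _ ≤ #s * β * ∑ i ∈ s, volume {x | β < h i x} ^ (1 / p) := by
        gcongr
        exact ENNReal.rpow_sum_le_sum_rpow s _ hr₀ (by rw [div_le_one (by linarith)]; exact hp)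
    _ = #s * ∑ i ∈ s, β * volume {x | β < h i x} ^ (1 / p) := by
        rw [mul_assoc, Finset.mul_sum]
    _ ≤ #s * ∑ i ∈ s, wLp n p (h i) := by
        gcongr with i
        exact le_wLp (h i) hβ₀ hβ

theorem lintegral_indicator_lt_le (hp : 0 < p)
    {g : EuclideanSpace ℝ (Fin n) → ℝ≥0∞} (hg : Measurable g) {α : ℝ≥0∞} (hα : α ≠ 0)
    (hα_top : α ≠ ∞) :
    ∫⁻ y, {y | α < g y}.indicator g y ≤
      2 * (1 - 2 ^ (1 - p))⁻¹ * (α * (wLp n p g / α) ^ p) := by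
  have hmeas (k : ℕ) : MeasurableSet {y | 2 ^ k * α < g y} :=
    measurableSet_lt measurable_const hg
  calc ∫⁻ y, {y | α < g y}.indicator g y
      ≤ ∫⁻ y, ∑' k : ℕ, {y | 2 ^ k * α < g y}.indicator (fun _ => 2 ^ (k + 1) * α) y :=
        lintegral_mono (indicator_le_tsum_indicator_two_pow g hα hα_top)
    _ = ∑' k : ℕ, 2 ^ (k + 1) * α * volume {y | 2 ^ k * α < g y} := by
        rw [lintegral_tsum fun k => (measurable_const.indicator (hmeas k)).aemeasurable]
        simp only [lintegral_indicator_const (hmeas _)]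
    _ ≤ ∑' k : ℕ, 2 ^ (k + 1) * α * (wLp n p g / (2 ^ k * α)) ^ p := by
        gcongr with k
        exact volume_lt_le_wLp_div_rpow hp g (mul_ne_zero (pow_ne_zero _ two_ne_zero) hα)
          (ENNReal.mul_ne_top (ENNReal.pow_ne_top ENNReal.ofNat_ne_top) hα_top)
    _ = 2 * (1 - 2 ^ (1 - p))⁻¹ * (α * (wLp n p g / α) ^ p) := by
        simp only [ENNReal.two_pow_succ_mul_mul_div_rpow _ _ hp.le, ENNReal.tsum_mul_left,
          ENNReal.tsum_geometric]
        ring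

end WeakLp

section Maximal

variable {n : ℕ} {p : ℝ}

theorem maxFn_mono {g₁ g₂ : EuclideanSpace ℝ (Fin n) → ℝ≥0∞} (h : g₁ ≤ g₂) :
    maxFn n g₁ ≤ maxFn n g₂ := fun _ =>
  iSup₂_mono fun _ _ => ENNReal.div_le_div_right (lintegral_mono fun y => h y) _

theorem maxFn_add_const_le (g : EuclideanSpace ℝ (Fin n) → ℝ≥0∞) (c : ℝ≥0∞)
    (x : EuclideanSpace ℝ (Fin n)) : maxFn n (fun y => g y + c) x ≤ maxFn n g x + c := by
  refine iSup₂_le fun r hr => ?_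
  rw [lintegral_add_right _ measurable_const, setLIntegral_const, ENNReal.add_div,
    ENNReal.mul_div_cancel_right (measure_ball_pos volume x hr).ne' measure_ball_lt_top.ne]
  gcongr
  exact le_iSup₂_of_le (f := fun r (_ : 0 < r) =>
    (∫⁻ y in ball x r, g y) / volume (ball x r)) r hr le_rfl

theorem exists_ball_of_lt_maxFn {g : EuclideanSpace ℝ (Fin n) → ℝ≥0∞}
    {x : EuclideanSpace ℝ (Fin n)} {l : ℝ≥0∞} (hl : l < maxFn n g x) :
    ∃ r, 0 < r ∧ l * volume (ball x r) < ∫⁻ y in ball x r, g y := by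
  simp only [maxFn, lt_iSup_iff] at hl
  obtain ⟨r, hr, hlr⟩ := hl
  exact ⟨r, hr, (ENNReal.lt_div_iff_mul_lt (.inl (measure_ball_pos volume x hr).ne')
    (.inl measure_ball_lt_top.ne)).1 hlr⟩

theorem exists_forall_le_of_volume_ball_lt (hn : 1 ≤ n) {B : ℝ≥0∞} (hB : B ≠ ∞) :
    ∃ R : ℝ, ∀ (x : EuclideanSpace ℝ (Fin n)) (r : ℝ), volume (ball x r) < B → r ≤ R := by
  have : NeZero n := ⟨by omega⟩
  set v := volume (ball (0 : EuclideanSpace ℝ (Fin n)) 1)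
  refine ⟨max 1 (B / v).toReal, fun x r hr => ?_⟩
  by_contra! hRr
  have hr₁ : 1 < r := (le_max_left _ _).trans_lt hRr
  have hvol : ENNReal.ofReal r * v ≤ volume (ball x r) := by
    rw [Measure.addHaar_ball volume x (by linarith), finrank_euclideanSpace_fin]
    gcongr
    exact le_self_pow₀ hr₁.le (by omega)
  have hlt : ENNReal.ofReal r < B / v := by
    rw [ENNReal.lt_div_iff_mul_lt (.inl (measure_ball_pos volume _ one_pos).ne')
      (.inl measure_ball_lt_top.ne)]
    exact hvol.trans_lt hr
  have := (ENNReal.ofReal_lt_iff_lt_toReal (by linarith) (ENNReal.div_ne_top hB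
    (measure_ball_pos volume _ one_pos).ne')).1 hlt
  exact absurd ((le_max_right _ _).trans_lt hRr) (not_lt.2 this.le)

theorem volume_lt_maxFn_le (hn : 1 ≤ n) (g : EuclideanSpace ℝ (Fin n) → ℝ≥0∞)
    {l : ℝ≥0∞} (hl : l ≠ 0) :
    volume {x | l < maxFn n g x} ≤ 4 ^ n * (∫⁻ x, g x) / l := by
  have : NeZero n := ⟨by omega⟩
  rcases eq_or_ne l ∞ with rfl | hl_top
  · simp
  set I := ∫⁻ x, g x
  rcases eq_or_ne I ∞ with hI | hI
  · simp [hI, ENNReal.mul_top, ENNReal.top_div_of_ne_top hl_top]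
  set E := {x | l < maxFn n g x}
  choose! r hr hrg using fun x (hx : x ∈ E) => exists_ball_of_lt_maxFn hx
  obtain ⟨R, hR⟩ := exists_forall_le_of_volume_ball_lt hn (ENNReal.div_ne_top hI hl)
  have hrR : ∀ x ∈ E, r x ≤ R := fun x hx => hR x (r x) <| by
    rw [ENNReal.lt_div_iff_mul_lt (.inl hl) (.inl hl_top), mul_comm]
    exact (hrg x hx).trans_le (setLIntegral_le_lintegral _ _)
  obtain ⟨u, huE, hu_disj, hu_cover⟩ :=
    Vitali.exists_disjoint_subfamily_covering_enlargement_closedBall E id r R hrR 4 (by norm_num)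
  have hu_disj' : u.PairwiseDisjoint fun x => ball x (r x) :=
    hu_disj.mono fun _ => ball_subset_closedBall
  have : Countable u := (hu_disj'.countable_of_isOpen (fun _ _ => isOpen_ball)
    fun x hx => nonempty_ball.2 (hr x (huE hx))).to_subtype
  have hE : E ⊆ ⋃ x : u, closedBall (x : EuclideanSpace ℝ (Fin n)) (4 * r x) := fun x hx => by
    obtain ⟨y, hy, hxy⟩ := hu_cover x hx
    exact mem_iUnion.2 ⟨⟨y, hy⟩, hxy (mem_closedBall_self (hr x hx).le)⟩
  calc volume E
      ≤ ∑' x : u, volume (closedBall (x : EuclideanSpace ℝ (Fin n)) (4 * r x)) :=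
        (measure_mono hE).trans (measure_iUnion_le _)
    _ = ∑' x : u, 4 ^ n * volume (ball (x : EuclideanSpace ℝ (Fin n)) (r x)) := by
        refine tsum_congr fun x => ?_
        rw [Measure.addHaar_closedBall_mul_eq volume _ four_pos, finrank_euclideanSpace_fin,
          ENNReal.ofReal_pow zero_le_four, ENNReal.ofReal_ofNat]
    _ ≤ ∑' x : u, 4 ^ n * ((∫⁻ y in ball (x : EuclideanSpace ℝ (Fin n)) (r x), g y) / l) := by
        gcongr with x
        rw [ENNReal.le_div_iff_mul_le (.inl hl) (.inl hl_top), mul_comm]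
        exact (hrg x (huE x.2)).le
    _ = 4 ^ n * (∫⁻ y in ⋃ x : u, ball (x : EuclideanSpace ℝ (Fin n)) (r x), g y) / l := by
        rw [lintegral_iUnion (fun _ => measurableSet_ball) (hu_disj'.subtype _ _),
          ENNReal.tsum_mul_left, mul_div_assoc]
        simp only [div_eq_mul_inv, ENNReal.tsum_mul_right]
    _ ≤ 4 ^ n * I / l := by gcongr; exact setLIntegral_le_lintegral _ _

theorem maxFn_le_maxFn_indicator_add (g : EuclideanSpace ℝ (Fin n) → ℝ≥0∞) (α : ℝ≥0∞)
    (x : EuclideanSpace ℝ (Fin n)) :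
    maxFn n g x ≤ maxFn n ({y | α < g y}.indicator g) x + α := by
  refine (maxFn_mono (fun y => ?_) x).trans (maxFn_add_const_le _ α x)
  by_cases hy : α < g y
  · simp [indicator_of_mem (show y ∈ {y | α < g y} from hy)]
  · simpa [hy] using not_lt.1 hy

noncomputable def maximalWeakConst (n : ℕ) (p : ℝ) : ℝ≥0∞ :=
  2 * (4 ^ n * (2 * (1 - 2 ^ (1 - p))⁻¹)) ^ (1 / p)

theorem maximalWeakConst_ne_top (hp : 1 < p) : maximalWeakConst n p ≠ ∞ := by
  have h : (2 : ℝ≥0∞) ^ (1 - p) < 1 :=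
    ENNReal.rpow_lt_one_of_one_lt_of_neg one_lt_two (by linarith)
  refine ENNReal.mul_ne_top ENNReal.ofNat_ne_top
    (ENNReal.rpow_ne_top_of_nonneg (by positivity) ?_)
  refine ENNReal.mul_ne_top (ENNReal.pow_ne_top ENNReal.ofNat_ne_top)
    (ENNReal.mul_ne_top ENNReal.ofNat_ne_top ?_)
  rw [Ne, ENNReal.inv_eq_top, tsub_eq_zero_iff_le, not_le]
  exact h

theorem wLp_maxFn_le (hn : 1 ≤ n) (hp : 0 < p)
    {g : EuclideanSpace ℝ (Fin n) → ℝ≥0∞} (hg : Measurable g) :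
    wLp n p (maxFn n g) ≤ maximalWeakConst n p * wLp n p g := by
  refine iSup₂_le fun l hl => ?_
  set α : ℝ≥0∞ := l / 2
  have hα : α ≠ 0 := by simp [α, hl.ne']
  have hα_top : α ≠ ∞ := ENNReal.div_ne_top ENNReal.coe_ne_top two_ne_zero
  have hl_eq : (l : ℝ≥0∞) = 2 * α :=
    (ENNReal.mul_div_cancel two_ne_zero ENNReal.ofNat_ne_top).symm
  set D : ℝ≥0∞ := 4 ^ n * (2 * (1 - 2 ^ (1 - p))⁻¹)
  have hsplit : {x | (l : ℝ≥0∞) < maxFn n g x} ⊆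
      {x | α < maxFn n ({y | α < g y}.indicator g) x} := fun x hx => by
    by_contra hx'
    refine (mem_ofPred_eq ▸ hx).not_ge ?_
    calc maxFn n g x ≤ maxFn n ({y | α < g y}.indicator g) x + α :=
          maxFn_le_maxFn_indicator_add g α x
      _ ≤ l := by rw [hl_eq, two_mul]; gcongr; exact not_lt.1 hx'
  have hvol : volume {x | (l : ℝ≥0∞) < maxFn n g x} ≤ D * (wLp n p g / α) ^ p :=
    calc volume {x | (l : ℝ≥0∞) < maxFn n g x}
        ≤ 4 ^ n * (∫⁻ y, {y | α < g y}.indicator g y) / α :=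
          (measure_mono hsplit).trans (volume_lt_maxFn_le hn _ hα)
      _ ≤ 4 ^ n * (2 * (1 - 2 ^ (1 - p))⁻¹ * (α * (wLp n p g / α) ^ p)) / α := by
          gcongr
          exact lintegral_indicator_lt_le hp hg hα hα_top
      _ = D * (wLp n p g / α) ^ p * (α / α) := by
          simp only [div_eq_mul_inv, D]
          ring
      _ = D * (wLp n p g / α) ^ p := by rw [ENNReal.div_self hα hα_top, mul_one]
  calc (l : ℝ≥0∞) * volume {x | (l : ℝ≥0∞) < maxFn n g x} ^ (1 / p)
      ≤ l * (D * (wLp n p g / α) ^ p) ^ (1 / p) := by gcongr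
    _ = 2 * D ^ (1 / p) * (wLp n p g * (α / α)) := by
        rw [ENNReal.mul_rpow_of_nonneg _ _ (by positivity), ← ENNReal.rpow_mul,
          mul_one_div_cancel hp.ne', ENNReal.rpow_one, hl_eq]
        simp only [div_eq_mul_inv]
        ring
    _ = maximalWeakConst n p * wLp n p g := by
        rw [ENNReal.div_self hα hα_top, mul_one]
        rfl

theorem weighted_wLp_le_sum_neighbours (hn : 1 ≤ n) (hp : 1 ≤ p) {c₀ : ℝ}
    (hc₀ : 0 < c₀) (m σ : ℝ) (C₀ : NNReal) {G : ℤ → EuclideanSpace ℝ (Fin n) → ℝ≥0∞}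
    (hG : ∀ j, Measurable (G j)) {jt j : ℤ} (hj : jt ≤ j) {f : EuclideanSpace ℝ (Fin n) → ℝ≥0∞}
    (hf : ∀ x, f x ≤ C₀ * ENNReal.ofReal (Real.exp (-(c₀ * (4 : ℝ) ^ (j - jt)))) *
      ∑' j' : {j' : ℤ // |j - j'| ≤ 1}, maxFn n (G j'.1) x) :
    2 ^ (2 * ((j : ℝ) - jt) * m) * 2 ^ ((j : ℝ) * σ) * wLp n p f ≤
      C₀ * ENNReal.ofReal (Real.exp (m ^ 2 / c₀)) * (3 * maximalWeakConst n p) * 2 ^ |σ| *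
        ∑ d ∈ Finset.Icc (-1 : ℤ) 1, 2 ^ (((j + d : ℤ) : ℝ) * σ) * wLp n p (G (j + d)) := by
  have hp₀ : 0 < p := zero_lt_one.trans_le hp
  set s := Finset.Icc (-1 : ℤ) 1
  have hs : (#s : ℝ≥0∞) = 3 := by simp [s]
  set e := ENNReal.ofReal (Real.exp (-(c₀ * (4 : ℝ) ^ (j - jt))))
  have hwF : wLp n p f ≤ C₀ * e * (3 * ∑ d ∈ s, maximalWeakConst n p * wLp n p (G (j + d))) :=
    calc wLp n p f
        ≤ wLp n p (fun x => C₀ * e * ∑ d ∈ s, maxFn n (G (j + d)) x) :=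
          wLp_mono hp₀.le fun x => (hf x).trans_eq <| by
            rw [tsum_subtype_abs_sub_le_one (fun j' => maxFn n (G j') x)]
      _ ≤ C₀ * e * (#s * ∑ d ∈ s, wLp n p (maxFn n (G (j + d)))) :=
          (wLp_const_mul_le hp₀ (by finiteness) _).trans (by gcongr; exact wLp_sum_le hp s _)
      _ ≤ C₀ * e * (3 * ∑ d ∈ s, maximalWeakConst n p * wLp n p (G (j + d))) := by
          rw [hs]
          gcongr with d
          exact wLp_maxFn_le hn hp₀ (hG _)
  have hdecay : 2 ^ (2 * ((j : ℝ) - jt) * m) * e ≤ ENNReal.ofReal (Real.exp (m ^ 2 / c₀)) := by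
    simpa using ENNReal.two_rpow_mul_ofReal_exp_neg_le (m := m) hc₀ (sub_nonneg.2 hj)
  have hshift (d) (hd : d ∈ s) :
      (2 : ℝ≥0∞) ^ ((j : ℝ) * σ) ≤ 2 ^ |σ| * 2 ^ (((j + d : ℤ) : ℝ) * σ) :=
    have hjd : |j - (j + d)| ≤ 1 := by have := Finset.mem_Icc.1 hd; rw [abs_le]; omega
    ENNReal.two_rpow_mul_le_of_abs_sub_le_one (by exact_mod_cast hjd) σ
  calc 2 ^ (2 * ((j : ℝ) - jt) * m) * 2 ^ ((j : ℝ) * σ) * wLp n p f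
      ≤ 2 ^ (2 * ((j : ℝ) - jt) * m) * 2 ^ ((j : ℝ) * σ) *
          (C₀ * e * (3 * ∑ d ∈ s, maximalWeakConst n p * wLp n p (G (j + d)))) := by gcongr
    _ = 2 ^ (2 * ((j : ℝ) - jt) * m) * e * (C₀ * (3 * maximalWeakConst n p)) *
          ∑ d ∈ s, 2 ^ ((j : ℝ) * σ) * wLp n p (G (j + d)) := by
        simp only [Finset.mul_sum]
        exact Finset.sum_congr rfl fun d _ => by ring
    _ ≤ ENNReal.ofReal (Real.exp (m ^ 2 / c₀)) * (C₀ * (3 * maximalWeakConst n p)) *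
          ∑ d ∈ s, 2 ^ |σ| * 2 ^ (((j + d : ℤ) : ℝ) * σ) * wLp n p (G (j + d)) := by
        gcongr with d hd
        exact hshift d hd
    _ = _ := by
        simp only [Finset.mul_sum]
        exact Finset.sum_congr rfl fun d _ => by ring

end Maximal

theorem high_frequency_estimate_general (n : ℕ) (hn : 1 ≤ n) (p q m c₀ : ℝ)
    (hp : 1 < p) (hq : 1 ≤ q) (hc₀ : 0 < c₀) (C₀ : NNReal)
    (G : ℤ → EuclideanSpace ℝ (Fin n) → ℝ≥0∞)
    (F : ℤ → ℤ → EuclideanSpace ℝ (Fin n) → ℝ≥0∞)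
    (hG : ∀ j, Measurable (G j))
    (hFG : ∀ (jt j : ℤ), jt ≤ j → ∀ x : EuclideanSpace ℝ (Fin n),
      F j jt x ≤ (C₀ : ℝ≥0∞) * ENNReal.ofReal (Real.exp (-(c₀ * (4 : ℝ) ^ (j - jt)))) *
        ∑' j' : {j' : ℤ // |j - j'| ≤ 1}, maxFn n (G j'.1) x) :
    ∃ C : NNReal, 0 < C ∧
      (⨆ jt : ℤ, ∑' j : {j : ℤ // jt ≤ j},
          ((2 : ℝ≥0∞) ^ (2 * ((j.1 : ℝ) - (jt : ℝ)) * m) *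
            (2 : ℝ≥0∞) ^ ((j.1 : ℝ) * ((n : ℝ) / p - 1)) * wLp n p (F j.1 jt)) ^ q)
        ≤ (C : ℝ≥0∞) *
          ∑' j' : ℤ, ((2 : ℝ≥0∞) ^ ((j' : ℝ) * ((n : ℝ) / p - 1)) * wLp n p (G j')) ^ q := by
  set σ := (n : ℝ) / p - 1
  set K := C₀ * ENNReal.ofReal (Real.exp (m ^ 2 / c₀)) * (3 * maximalWeakConst n p) * 2 ^ |σ|
  have hK : K ≠ ∞ := by
    have := maximalWeakConst_ne_top (n := n) hp
    finiteness
  set a : ℤ → ℝ≥0∞ := fun j' => (2 ^ ((j' : ℝ) * σ) * wLp n p (G j')) ^ q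
  have hs : (#(Finset.Icc (-1 : ℤ) 1) : ℝ≥0∞) = 3 := by simp
  refine ENNReal.exists_pos_nnreal_le_mul (c := K ^ q * 3 ^ (q - 1) * 3) (by finiteness) ?_
  refine iSup_le fun jt => ?_
  calc ∑' j : {j : ℤ // jt ≤ j}, (2 ^ (2 * ((j.1 : ℝ) - jt) * m) * 2 ^ ((j.1 : ℝ) * σ) *
        wLp n p (F j.1 jt)) ^ q
      ≤ ∑' j : {j : ℤ // jt ≤ j},
          K ^ q * (3 ^ (q - 1) * ∑ d ∈ Finset.Icc (-1 : ℤ) 1, a (j + d)) := by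
        refine ENNReal.tsum_le_tsum fun j => ?_
        refine (ENNReal.rpow_le_rpow (weighted_wLp_le_sum_neighbours hn hp.le hc₀ m σ C₀ hG j.2
          (hFG jt j j.2)) (by linarith)).trans ?_
        have hpow := ENNReal.rpow_sum_le_const_mul_sum_rpow (Finset.Icc (-1 : ℤ) 1)
          (fun d => 2 ^ (((j + d : ℤ) : ℝ) * σ) * wLp n p (G (j + d))) hq
        rw [hs] at hpow
        rw [ENNReal.mul_rpow_of_nonneg _ _ (by linarith)]
        gcongr
    _ ≤ ∑' j : ℤ, K ^ q * (3 ^ (q - 1) * ∑ d ∈ Finset.Icc (-1 : ℤ) 1, a (j + d)) :=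
        ENNReal.tsum_comp_le_tsum_of_injective Subtype.val_injective _
    _ = K ^ q * 3 ^ (q - 1) * 3 * ∑' j', a j' := by
        rw [ENNReal.tsum_mul_left, ENNReal.tsum_mul_left, ENNReal.tsum_sum_comp_add, hs]
        ring

/-- Section 3.3 (high-frequency estimate, core of Theorem 1.1): if for `j ≥ j_t`
`F_{j,j_t} ≤ C₀ e^{-c₀ 4^{j-j_t}} ∑_{|j-j'|≤1} M G_{j'}` pointwise, then
`sup_{j_t} ∑_{j≥j_t} (2^{2(j-j_t)m} 2^{j(n/p-1)} ‖F_{j,j_t}‖_{L^{p,∞}})^q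
  ≤ C ∑_{j'} (2^{j'(n/p-1)} ‖G_{j'}‖_{L^{p,∞}})^q`. -/
theorem high_frequency_estimate (n : ℕ) (hn : 1 ≤ n) (p q m c₀ : ℝ)
    (hp : 1 < p) (hq : 1 ≤ q) (hm : 0 < m) (hc₀ : 0 < c₀) (C₀ : NNReal) (hC₀ : 0 < C₀)
    (G : ℤ → EuclideanSpace ℝ (Fin n) → ℝ≥0∞)
    (F : ℤ → ℤ → EuclideanSpace ℝ (Fin n) → ℝ≥0∞)
    (hG : ∀ j, Measurable (G j)) (hF : ∀ j jt, Measurable (F j jt))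
    (hFG : ∀ (jt j : ℤ), jt ≤ j → ∀ x : EuclideanSpace ℝ (Fin n),
      F j jt x ≤ (C₀ : ℝ≥0∞) * ENNReal.ofReal (Real.exp (-(c₀ * (4 : ℝ) ^ (j - jt)))) *
        ∑' j' : {j' : ℤ // |j - j'| ≤ 1}, maxFn n (G j'.1) x) :
    ∃ C : NNReal, 0 < C ∧
      (⨆ jt : ℤ, ∑' j : {j : ℤ // jt ≤ j},
          ((2 : ℝ≥0∞) ^ (2 * ((j.1 : ℝ) - (jt : ℝ)) * m) *
            (2 : ℝ≥0∞) ^ ((j.1 : ℝ) * ((n : ℝ) / p - 1)) * wLp n p (F j.1 jt)) ^ q)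
        ≤ (C : ℝ≥0∞) *
          ∑' j' : ℤ, ((2 : ℝ≥0∞) ^ ((j' : ℝ) * ((n : ℝ) / p - 1)) * wLp n p (G j')) ^ q :=
  high_frequency_estimate_general n hn p q m c₀ hp hq hc₀ C₀ G F hG hFG
end
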